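/- arXiv:2212.00452 — 2 statements merged into one kernel-verified Lean document; each statement's English description precedes it below -/
import Mathlib

section
/- Let G be a finite connected simple graph on vertex set V, let B ⊆ V be a nonempty set of boundary vertices, and let x : V → ℝ³ be a realization such that every interior vertex (vertex not in B) is a strict convex combination of its neighbors. Then for every vertex v₀ ∈ V and every vector n ∈ ℝ³, there exists a walk v₀ = w₀, w₁, …, w_m in G whose values ⟪n, x(w₀)⟫ ≤ ⟪n, x(w₁)⟫ ≤ … ≤ ⟪n, x(w_m)⟫ are non-decreasing, such that w_m ∈ B and ⟪n, x(w_m)⟫ ≥ ⟪n, x(u)⟫ for every neighbor u of w_m. -/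
open scoped RealInnerProductSpace

/-- `v` is realized as a strict convex combination of its neighbors in `G`. -/
def StrictConvexCombOfNeighbors {V : Type*} [Fintype V] (G : SimpleGraph V)
    [DecidableRel G.Adj] (x : V → EuclideanSpace ℝ (Fin 3)) (v : V) : Prop :=
  ∃ b : V → ℝ,
    (∀ w ∈ G.neighborFinset v, 0 < b w) ∧
    (∑ w ∈ G.neighborFinset v, b w = 1) ∧
    x v = ∑ w ∈ G.neighborFinset v, b w • x w

lemma avg_eq_max {V : Type*} (s : Finset V) (b f : V → ℝ) (c : ℝ)
    (hb : ∀ w ∈ s, 0 < b w) (hs : ∑ w ∈ s, b w = 1)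
    (hle : ∀ w ∈ s, f w ≤ c) (heq : ∑ w ∈ s, b w * f w = c) :
    ∀ w ∈ s, f w = c := by
  have h0 : ∑ w ∈ s, b w * (c - f w) = 0 := by
    have : ∑ w ∈ s, b w * (c - f w) = (∑ w ∈ s, b w) * c - ∑ w ∈ s, b w * f w := by
      simp only [mul_sub]
      rw [Finset.sum_sub_distrib, ← Finset.sum_mul]
    rw [this, hs, heq]; ring
  intro w hw
  have hnn : ∀ v ∈ s, 0 ≤ b v * (c - f v) := fun v hv =>
    mul_nonneg (hb v hv).le (sub_nonneg.2 (hle v hv))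
  have := (Finset.sum_eq_zero_iff_of_nonneg hnn).1 h0 w hw
  have hbw := hb w hw
  nlinarith [this]

/-- In a finite connected graph realized in `ℝ³` with every interior vertex a strict
convex combination of its neighbors, every vertex `v₀` is joined, for every direction
`n`, by a walk with non-decreasing `⟪n, x ·⟫`-values to a boundary vertex whose value
is at least that of all its neighbors. -/
theorem nondecreasing_walk_to_extreme_boundary_vertex
    {V : Type*} [Fintype V] (G : SimpleGraph V) [DecidableRel G.Adj]
    (hconn : G.Connected) (B : Set V) (hB : B.Nonempty)
    (x : V → EuclideanSpace ℝ (Fin 3))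
    (hint : ∀ v ∉ B, StrictConvexCombOfNeighbors G x v)
    (v₀ : V) (n : EuclideanSpace ℝ (Fin 3)) :
    ∃ (m : ℕ) (w : Fin (m + 1) → V),
      w 0 = v₀ ∧
      (∀ i : Fin m, G.Adj (w i.castSucc) (w i.succ)) ∧
      (∀ i : Fin m, ⟪n, x (w i.castSucc)⟫ ≤ ⟪n, x (w i.succ)⟫) ∧
      w (Fin.last m) ∈ B ∧
      (∀ u, G.Adj (w (Fin.last m)) u → ⟪n, x u⟫ ≤ ⟪n, x (w (Fin.last m))⟫) := by
  classical
  set f : V → ℝ := fun v => ⟪n, x v⟫ with hf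
  -- S: vertices v admitting a nonincreasing walk down to v₀
  set S : Set V := {v | ∃ p : G.Walk v v₀, ∀ i < p.length,
      f (p.getVert (i + 1)) ≤ f (p.getVert i)} with hS
  have hv₀S : v₀ ∈ S := ⟨SimpleGraph.Walk.nil, by simp⟩
  -- closure of S upwards
  have hclosed : ∀ u ∈ S, ∀ w, G.Adj w u → f u ≤ f w → w ∈ S := by
    rintro u ⟨p, hp⟩ w hadj hle
    refine ⟨SimpleGraph.Walk.cons hadj p, ?_⟩
    intro i hi
    cases i with
    | zero => simpa [SimpleGraph.Walk.getVert_cons_succ] using hle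
    | succ j =>
      simp only [SimpleGraph.Walk.getVert_cons_succ]
      exact hp j (by simpa using hi)
  -- maximal element of S
  obtain ⟨T, hTne⟩ : ∃ T : Finset V, T = Finset.univ.filter (· ∈ S) := ⟨_, rfl⟩
  have hTne' : T.Nonempty := ⟨v₀, by simp [hTne, hv₀S]⟩
  obtain ⟨vm, hvmT, hvmmax⟩ := T.exists_max_image f hTne'
  have hvmS : vm ∈ S := by simpa [hTne] using hvmT
  have hmaxS : ∀ u ∈ S, f u ≤ f vm := by
    intro u hu; exact hvmmax u (by simp [hTne, hu])
  -- any max vertex of S is extreme among its neighbors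
  have hextreme : ∀ u ∈ S, f vm ≤ f u → ∀ w, G.Adj u w → f w ≤ f u := by
    intro u huS hufm w hadj
    by_contra hlt
    push_neg at hlt
    have hwS : w ∈ S := hclosed u huS w hadj.symm hlt.le
    have := hmaxS w hwS
    linarith
  -- the set of max vertices of S is closed under adjacency, unless it meets B
  by_cases hBmax : ∃ u ∈ S, f u = f vm ∧ u ∈ B
  · -- done: take that u
    obtain ⟨u, huS, hufm, huB⟩ := hBmax
    obtain ⟨p, hp⟩ := huS
    refine ⟨p.length, fun i => p.getVert (p.length - i), ?_, ?_, ?_, ?_, ?_⟩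
    · simp [SimpleGraph.Walk.getVert_length]
    · intro i
      have hi : (i : ℕ) < p.length := i.isLt
      have h1 : (i.castSucc : ℕ) = (i : ℕ) := rfl
      have h2 : (i.succ : ℕ) = (i : ℕ) + 1 := rfl
      have hj : p.length - ((i : ℕ) + 1) + 1 = p.length - (i : ℕ) := by omega
      have := p.adj_getVert_succ (i := p.length - ((i : ℕ) + 1)) (by omega)
      rw [hj] at this
      simp only [Fin.coe_castSucc, Fin.val_succ]
      exact this.symm
    · intro i
      have hi : (i : ℕ) < p.length := i.isLt
      have h1 : (i.castSucc : ℕ) = (i : ℕ) := rfl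
      have h2 : (i.succ : ℕ) = (i : ℕ) + 1 := rfl
      have hj : p.length - ((i : ℕ) + 1) + 1 = p.length - (i : ℕ) := by omega
      have := hp (p.length - ((i : ℕ) + 1)) (by omega)
      rw [hj] at this
      simp only [Fin.coe_castSucc, Fin.val_succ]
      exact this
    · simpa [Fin.last] using huB
    · intro u' hadj
      have : f u' ≤ f u := hextreme u ⟨p, hp⟩ (le_of_eq hufm.symm) u' (by simpa [Fin.last] using hadj)
      simpa [Fin.last] using this
  · -- contradiction: max set M is adjacency-closed, hence all of V, but B nonempty
    exfalso
    push_neg at hBmax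
    set M : Set V := {u | u ∈ S ∧ f u = f vm} with hM
    have hMclosed : ∀ u ∈ M, ∀ w, G.Adj u w → w ∈ M := by
      rintro u ⟨huS, hufm⟩ w hadj
      have huB : u ∉ B := fun h => hBmax u huS hufm h
      obtain ⟨b, hbpos, hbsum, hbx⟩ := hint u huB
      have hnb : ∀ v ∈ G.neighborFinset u, f v ≤ f u := by
        intro v hv
        exact hextreme u huS hufm.ge v ((G.mem_neighborFinset u v).1 hv)
      have hfu : ∑ v ∈ G.neighborFinset u, b v * f v = f u := by
        have : f u = ⟪n, ∑ v ∈ G.neighborFinset u, b v • x v⟫ := by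
          show ⟪n, x u⟫ = _; rw [hbx]
        rw [inner_sum] at this
        simp only [real_inner_smul_right] at this
        exact this.symm
      have hall := avg_eq_max (G.neighborFinset u) b f (f u) hbpos hbsum hnb hfu
      have hwmem : w ∈ G.neighborFinset u := (G.mem_neighborFinset u w).2 hadj
      have hfw : f w = f u := hall w hwmem
      have hwS : w ∈ S := hclosed u huS w hadj.symm hfw.ge
      exact ⟨hwS, hfw.trans hufm⟩
    have hvmM : vm ∈ M := ⟨hvmS, rfl⟩
    obtain ⟨b0, hb0⟩ := hB
    have : ∀ {a c : V}, G.Walk a c → a ∈ M → c ∈ M := by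
      intro a c p
      induction p with
      | nil => exact id
      | cons h q ih => intro ha; exact ih (hMclosed _ ha _ h)
    have hb0M : b0 ∈ M := this (hconn vm b0).some hvmM
    exact hBmax b0 hb0M.1 hb0M.2 hb0
end

section
/- Let G be a finite connected simple graph on vertex set V, let B ⊆ V be a nonempty set of boundary vertices, and let x : V → ℝ³ be a realization such that every interior vertex (vertex not in B) is a strict convex combination of its neighbors. Then every vertex is realized in the convex hull of the boundary positions: for every v ∈ V, x(v) ∈ convexHull(x(B)), where x(B) = { x(b) : b ∈ B }. -/
theorem Finset.forall_eq_of_forall_le_of_eq_sum_mul {ι 𝕜 : Type*} [Field 𝕜] [LinearOrder 𝕜]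
    [IsStrictOrderedRing 𝕜] {s : Finset ι} {b f : ι → 𝕜} {c : 𝕜} (hb : ∀ i ∈ s, 0 < b i)
    (hb1 : ∑ i ∈ s, b i = 1) (hc : c = ∑ i ∈ s, b i * f i) (hle : ∀ i ∈ s, f i ≤ c) :
    ∀ i ∈ s, f i = c := by
  have hmul_le : ∀ i ∈ s, b i * f i ≤ b i * c := fun i hi ↦
    mul_le_mul_of_nonneg_left (hle i hi) (hb i hi).le
  have hsum : ∑ i ∈ s, b i * f i = ∑ i ∈ s, b i * c := by
    rw [← Finset.sum_mul, hb1, one_mul, hc]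
  intro i hi
  exact mul_left_cancel₀ (hb i hi).ne' ((Finset.sum_eq_sum_iff_of_le hmul_le).1 hsum i hi)

namespace SimpleGraph

variable {V : Type*} {G : SimpleGraph V}

theorem Reachable.of_forall_adj_imp {P : V → Prop} {u v : V} (h : G.Reachable u v)
    (hP : ∀ a b, G.Adj a b → P a → P b) (hu : P u) : P v := by
  rw [reachable_iff_reflTransGen] at h
  induction h with
  | refl => exact hu
  | tail _ hadj ih => exact hP _ _ hadj ih

theorem Connected.exists_mem_le_of_flat_local_max [Finite V] {α : Type*} [LinearOrder α]
    (hG : G.Connected) {B : Set V} (hB : B.Nonempty) {f : V → α}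
    (hf : ∀ v ∉ B, (∀ w, G.Adj v w → f w ≤ f v) → ∀ w, G.Adj v w → f w = f v) (v : V) :
    ∃ b ∈ B, f v ≤ f b := by
  have : Nonempty V := hB.to_subtype.map Subtype.val
  obtain ⟨m, hm⟩ := Finite.exists_max f
  suffices ∃ b ∈ B, f m ≤ f b from this.imp fun b ⟨hb, hmb⟩ ↦ ⟨hb, (hm v).trans hmb⟩
  by_contra! hlt
  have hclosed : ∀ a c, G.Adj a c → f a = f m → f c = f m := fun a c hac ha ↦ by
    have haB : a ∉ B := fun haB ↦ (hlt a haB).ne ha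
    rw [hf a haB (fun w _ ↦ ha ▸ hm w) c hac, ha]
  obtain ⟨b, hb⟩ := hB
  exact (hlt b hb).ne ((hG m b).of_forall_adj_imp hclosed rfl)

end SimpleGraph

theorem StrictConvexCombOfNeighbors.apply_eq_of_forall_adj_le {V : Type*} [Fintype V]
    {G : SimpleGraph V} [DecidableRel G.Adj] {x : V → EuclideanSpace ℝ (Fin 3)} {v : V}
    {F : Type*} [FunLike F (EuclideanSpace ℝ (Fin 3)) ℝ]
    [LinearMapClass F ℝ (EuclideanSpace ℝ (Fin 3)) ℝ] (φ : F)
    (h : StrictConvexCombOfNeighbors G x v) (hmax : ∀ w, G.Adj v w → φ (x w) ≤ φ (x v)) :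
    ∀ w, G.Adj v w → φ (x w) = φ (x v) := by
  obtain ⟨b, hb, hb1, hxv⟩ := h
  have hφv : φ (x v) = ∑ w ∈ G.neighborFinset v, b w * φ (x w) := by
    simp only [hxv, map_sum, map_smul, smul_eq_mul]
  intro w hw
  exact Finset.forall_eq_of_forall_le_of_eq_sum_mul hb hb1 hφv
    (fun u hu ↦ hmax u ((G.mem_neighborFinset v u).1 hu)) w ((G.mem_neighborFinset v w).2 hw)

theorem mem_convexHull_of_forall_exists_le {E : Type*} [NormedAddCommGroup E] [NormedSpace ℝ E]
    {s : Set E} (hs : s.Finite) {p : E} (h : ∀ φ : StrongDual ℝ E, ∃ q ∈ s, φ p ≤ φ q) :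
    p ∈ convexHull ℝ s := by
  by_contra hp
  obtain ⟨φ, u, hφs, hφp⟩ := geometric_hahn_banach_closed_point (convex_convexHull ℝ s)
    (hs.isCompact_convexHull ℝ).isClosed hp
  obtain ⟨q, hq, hpq⟩ := h φ
  exact (hφp.trans_le hpq).not_gt (hφs q (subset_convexHull ℝ s hq))

/-- Discrete maximum principle: in a finite connected graph realized in `ℝ³` with
every interior vertex a strict convex combination of its neighbors, every vertex is
realized in the convex hull of the boundary positions. -/
theorem vertex_mem_convexHull_boundary
    {V : Type*} [Fintype V] (G : SimpleGraph V) [DecidableRel G.Adj]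
    (hconn : G.Connected) (B : Set V) (hB : B.Nonempty)
    (x : V → EuclideanSpace ℝ (Fin 3))
    (hint : ∀ v ∉ B, StrictConvexCombOfNeighbors G x v) :
    ∀ v : V, x v ∈ convexHull ℝ (x '' B) := by
  intro v
  refine mem_convexHull_of_forall_exists_le (x '' B).toFinite fun φ ↦ ?_
  obtain ⟨b, hb, hle⟩ := hconn.exists_mem_le_of_flat_local_max hB
    (fun u hu ↦ (hint u hu).apply_eq_of_forall_adj_le φ) v
  exact ⟨x b, Set.mem_image_of_mem x hb, hle⟩
end
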